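/- arXiv:1603.03161 — 2 statements merged into one kernel-verified Lean document; each statement's English description precedes it below -/
import Mathlib

section
/- Let Ū4 be any 4-dimensional subspace of W̄. Then Ū4 is isotropic for λ̄ (i.e. λ̄(u1,u2,u3) = 0 for all u1,u2,u3 ∈ Ū4) if and only if dim(Ū4 ∩ A1) = dim(Ū4 ∩ A2) = 2, i.e. Ū4 = (Ū4 ∩ A1) ⊕ (Ū4 ∩ A2) with both summands 2-dimensional. (Set-theoretic form of the paper's Corollary: the zero locus of a general 3-form on Gr(4,6) is Gr(2,A1) × Gr(2,A2).) -/
open Module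

/-!
Write `λ = λ₁ + λ₂`, where `λ₁` only sees the `A₂`-components of its arguments and `λ₂` only
the `A₁`-components. If `U = (U ∩ A₁) ⊕ (U ∩ A₂)` with both summands of dimension 2, then the
`A₂`-components of three vectors of `U` lie in a plane, so `λ₁` vanishes on them, and likewise
`λ₂`. Conversely, `U ∩ A₁ ≠ 0` for dimension reasons; if moreover `dim (U ∩ A₂) ≤ 1`, then
`U + A₂ = W`, i.e. `U` surjects onto `A₁` modulo `A₂`. Extending a nonzero `w ∈ U ∩ A₁` to a
basis of `A₁` and lifting it to `U` gives three vectors of `U`, one of them `w ∈ A₁`, on which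
`λ₁` vanishes while `λ₂` takes the (nonzero) value of `λ₂|A₁` on a basis. By symmetry both
intersections have dimension `≥ 2`, hence exactly 2.
-/

theorem Submodule.exists_mem_sub_mem_of_mem_sup {R M : Type*} [Ring R] [AddCommGroup M]
    [Module R M] {A B : Submodule R M} {x : M} (hx : x ∈ A ⊔ B) : ∃ a ∈ A, x - a ∈ B := by
  obtain ⟨a, ha, b, hb, rfl⟩ := Submodule.mem_sup.1 hx
  exact ⟨a, ha, by rwa [add_sub_cancel_left]⟩

namespace AlternatingMap

section Ring

variable {R M N ι : Type*} [Ring R] [AddCommGroup M] [Module R M] [AddCommMonoid N] [Module R N]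

def IsIsotropic (f : M [⋀^ι]→ₗ[R] N) (U : Submodule R M) : Prop :=
  ∀ v : ι → M, (∀ i, v i ∈ U) → f v = 0

theorem isIsotropic_iff_fin_three (f : M [⋀^Fin 3]→ₗ[R] N) (U : Submodule R M) :
    f.IsIsotropic U ↔ ∀ u1 ∈ U, ∀ u2 ∈ U, ∀ u3 ∈ U, f ![u1, u2, u3] = 0 := by
  refine ⟨fun h u1 h1 u2 h2 u3 h3 => h _ fun i => by fin_cases i <;> assumption,
    fun h v hv => ?_⟩
  have hv3 : v = ![v 0, v 1, v 2] := by ext i; fin_cases i <;> rfl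
  rw [hv3]
  exact h _ (hv 0) _ (hv 1) _ (hv 2)

variable [Fintype ι]

theorem map_eq_of_forall_sub_mem (f : M [⋀^ι]→ₗ[R] N) {A : Submodule R M}
    (hf : ∀ v : ι → M, (∃ i, v i ∈ A) → f v = 0) {v w : ι → M} (h : ∀ i, v i - w i ∈ A) :
    f v = f w := by
  classical
  calc f v = f ((v - w) + w) := by rw [sub_add_cancel]
    _ = ∑ s : Finset ι, f (s.piecewise (v - w) w) := f.toMultilinearMap.map_add_univ _ _
    _ = f w := by
      rw [Finset.sum_eq_single ∅ (fun s _ hs => ?_) (by simp), Finset.piecewise_empty]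
      obtain ⟨i, hi⟩ := Finset.nonempty_iff_ne_empty.2 hs
      exact hf _ ⟨i, by simpa [hi] using h i⟩

theorem compLinearMap_subtype_ne_zero (f : M [⋀^ι]→ₗ[R] N) {A B : Submodule R M}
    (hAB : A ⊔ B = ⊤) (hf : ∀ v : ι → M, (∃ i, v i ∈ B) → f v = 0) (hne : f ≠ 0) :
    f.compLinearMap A.subtype ≠ 0 := by
  refine fun h0 => hne (ext fun v => ?_)
  have hv : ∀ i, v i ∈ A ⊔ B := fun i => hAB ▸ Submodule.mem_top
  choose a ha hsub using fun i => Submodule.exists_mem_sub_mem_of_mem_sup (hv i)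
  rw [f.map_eq_of_forall_sub_mem hf hsub, zero_apply]
  exact DFunLike.congr_fun h0 fun i => ⟨a i, ha i⟩

end Ring

section Field

variable {K V N ι : Type*} [Field K] [AddCommGroup V] [Module K V] [Fintype ι]

theorem map_eq_zero_of_finrank_lt [AddCommGroup N] [Module K N] (f : V [⋀^ι]→ₗ[K] N)
    {S : Submodule K V} [FiniteDimensional K S] (hS : finrank K S < Fintype.card ι)
    {v : ι → V} (hv : ∀ i, v i ∈ S) : f v = 0 := by
  refine f.map_linearDependent v fun hind => hS.not_ge ?_
  have hind' : LinearIndependent K (fun i => (⟨v i, hv i⟩ : S)) :=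
    LinearIndependent.of_comp S.subtype hind
  exact hind'.fintype_card_le_finrank

theorem exists_apply_eq_and_map_ne_zero [FiniteDimensional K V] (g : V [⋀^ι]→ₗ[K] K)
    (hcard : Fintype.card ι = finrank K V) (hg : g ≠ 0) {w : V} (hw : w ≠ 0) :
    ∃ t : ι → V, ∃ i, t i = w ∧ g t ≠ 0 := by
  have hs : LinearIndepOn K id ({w} : Set V) := (linearIndepOn_singleton_iff K).2 hw
  set b := Basis.extend hs
  have : Finite (hs.extend (Set.subset_univ _)) := Module.Finite.finite_basis b
  obtain ⟨e⟩ : Nonempty (hs.extend (Set.subset_univ _) ≃ ι) := by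
    rw [← Finite.card_eq, Nat.card_eq_fintype_card (α := ι), hcard, finrank_eq_nat_card_basis b]
  refine ⟨b.reindex e, e ⟨w, Basis.subset_extend hs rfl⟩, by simp [b], ?_⟩
  rwa [map_basis_ne_zero_iff]

theorem isIsotropic_add_of_le_sup [AddCommGroup N] [Module K N] {lam1 lam2 : V [⋀^ι]→ₗ[K] N}
    {B1 B2 U : Submodule K V} [FiniteDimensional K B1] [FiniteDimensional K B2]
    (hlam1 : ∀ v : ι → V, (∃ i, v i ∈ B1) → lam1 v = 0)
    (hlam2 : ∀ v : ι → V, (∃ i, v i ∈ B2) → lam2 v = 0)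
    (hB1 : finrank K B1 < Fintype.card ι) (hB2 : finrank K B2 < Fintype.card ι)
    (hU : U ≤ B1 ⊔ B2) : (lam1 + lam2).IsIsotropic U := by
  intro u hu
  choose a ha hsub using fun i => Submodule.exists_mem_sub_mem_of_mem_sup (hU (hu i))
  have h1 : lam1 u = 0 := by
    rw [lam1.map_eq_of_forall_sub_mem hlam1 (w := u - a) fun i => by simpa using ha i]
    exact lam1.map_eq_zero_of_finrank_lt hB2 hsub
  have h2 : lam2 u = 0 := by
    rw [lam2.map_eq_of_forall_sub_mem hlam2 hsub]
    exact lam2.map_eq_zero_of_finrank_lt hB1 ha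
  simp [h1, h2]

theorem not_isIsotropic_add_of_sup_eq_top (lam1 lam2 : V [⋀^ι]→ₗ[K] K)
    {A1 A2 U : Submodule K V} [FiniteDimensional K A1] (hcard : Fintype.card ι = finrank K A1)
    (hlam1 : ∀ v : ι → V, (∃ i, v i ∈ A1) → lam1 v = 0)
    (hlam2 : ∀ v : ι → V, (∃ i, v i ∈ A2) → lam2 v = 0)
    (hne : lam2.compLinearMap A1.subtype ≠ 0) (hUA1 : U ⊓ A1 ≠ ⊥) (hUA2 : U ⊔ A2 = ⊤) :
    ¬(lam1 + lam2).IsIsotropic U := by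
  intro hiso
  obtain ⟨w, ⟨hwU, hwA1⟩, hw0⟩ := Submodule.exists_mem_ne_zero_of_ne_bot hUA1
  obtain ⟨t, i₀, ht₀, ht⟩ := (lam2.compLinearMap A1.subtype).exists_apply_eq_and_map_ne_zero
    hcard hne (w := ⟨w, hwA1⟩) (by simpa using hw0)
  -- `w` itself serves as the lift of `t i₀`, so that one argument of `lam1` lies in `A1`.
  have hlift : ∀ i, ∃ x ∈ U, x - t i ∈ A2 ∧ (i = i₀ → x = w) := by
    intro i
    by_cases hi : i = i₀
    · subst hi
      exact ⟨w, hwU, by simp [ht₀], fun _ => rfl⟩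
    · have hti : (t i : V) ∈ U ⊔ A2 := hUA2 ▸ Submodule.mem_top
      obtain ⟨x, hx, hsub⟩ := Submodule.exists_mem_sub_mem_of_mem_sup hti
      exact ⟨x, hx, sub_mem_comm_iff.1 hsub, fun h => absurd h hi⟩
  choose u huU hsub hu₀ using hlift
  have h1 : lam1 u = 0 := hlam1 u ⟨i₀, hu₀ i₀ rfl ▸ hwA1⟩
  have h2 : lam2 u = lam2.compLinearMap A1.subtype t := lam2.map_eq_of_forall_sub_mem hlam2 hsub
  exact ht (by simpa [h1, h2] using hiso u huU)

end Field

end AlternatingMap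

open AlternatingMap

theorem two_le_finrank_inf_of_isIsotropic {K W : Type*} [Field K] [AddCommGroup W] [Module K W]
    [FiniteDimensional K W] (hW : finrank K W = 6) {A1 A2 U : Submodule K W} (hA : A1 ⊔ A2 = ⊤)
    (hA1 : finrank K A1 = 3) (hA2 : finrank K A2 = 3) {lam1 lam2 : W [⋀^Fin 3]→ₗ[K] K}
    (hlam2ne : lam2 ≠ 0)
    (hlam1 : ∀ v : Fin 3 → W, (∃ i, v i ∈ A1) → lam1 v = 0)
    (hlam2 : ∀ v : Fin 3 → W, (∃ i, v i ∈ A2) → lam2 v = 0)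
    (hU : finrank K U = 4) (hiso : (lam1 + lam2).IsIsotropic U) : 2 ≤ finrank K ↥(U ⊓ A2) := by
  by_contra! h
  have hUA1 := Submodule.finrank_sup_add_finrank_inf_eq U A1
  have hUA2 := Submodule.finrank_sup_add_finrank_inf_eq U A2
  have := Submodule.finrank_le (U ⊔ A1)
  have := Submodule.finrank_le (U ⊔ A2)
  refine not_isIsotropic_add_of_sup_eq_top lam1 lam2 (by simp [hA1]) hlam1 hlam2
    (lam2.compLinearMap_subtype_ne_zero hA hlam2 hlam2ne) (fun h0 => ?_) ?_ hiso
  · rw [h0, finrank_bot] at hUA1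
    omega
  · exact Submodule.eq_top_of_finrank_eq (by omega)

theorem stmt_1_general (k : Type*) [Field k]
    (W : Type*) [AddCommGroup W] [Module k W] [FiniteDimensional k W]
    (hW : finrank k W = 6)
    (A1 A2 : Submodule k W)
    (hA12 : A1 ⊓ A2 = ⊥) (hA12' : A1 ⊔ A2 = ⊤)
    (hA1 : finrank k A1 = 3) (hA2 : finrank k A2 = 3)
    (lam1 lam2 : AlternatingMap k W k (Fin 3))
    (hlam1ne : lam1 ≠ 0) (hlam2ne : lam2 ≠ 0)
    (hlam1 : ∀ v : Fin 3 → W, (∃ i, v i ∈ A1) → lam1 v = 0)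
    (hlam2 : ∀ v : Fin 3 → W, (∃ i, v i ∈ A2) → lam2 v = 0)
    (lam : AlternatingMap k W k (Fin 3)) (hlam : lam = lam1 + lam2)
    (U4 : Submodule k W) (hU4 : finrank k U4 = 4) :
    (∀ u1 ∈ U4, ∀ u2 ∈ U4, ∀ u3 ∈ U4, lam ![u1, u2, u3] = 0) ↔
      (finrank k ↥(U4 ⊓ A1) = 2 ∧ finrank k ↥(U4 ⊓ A2) = 2 ∧
        (U4 ⊓ A1) ⊔ (U4 ⊓ A2) = U4) := by
  subst hlam
  rw [← isIsotropic_iff_fin_three]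
  have hle : (U4 ⊓ A1) ⊔ (U4 ⊓ A2) ≤ U4 := sup_le inf_le_left inf_le_left
  have hdisj : (U4 ⊓ A1) ⊓ (U4 ⊓ A2) = ⊥ :=
    eq_bot_iff.2 fun x hx => hA12 ▸ Submodule.mem_inf.2 ⟨hx.1.2, hx.2.2⟩
  have hsum := Submodule.finrank_sup_add_finrank_inf_eq (U4 ⊓ A1) (U4 ⊓ A2)
  rw [hdisj, finrank_bot, add_zero] at hsum
  have hsup := Submodule.finrank_mono hle
  constructor
  · intro hiso
    have h2 := two_le_finrank_inf_of_isIsotropic hW hA12' hA1 hA2 hlam2ne hlam1 hlam2 hU4 hiso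
    have h1 := two_le_finrank_inf_of_isIsotropic hW (sup_comm A1 A2 ▸ hA12') hA2 hA1 hlam1ne
      hlam2 hlam1 hU4 (add_comm lam1 lam2 ▸ hiso)
    exact ⟨by omega, by omega, Submodule.eq_of_le_of_finrank_le hle (by omega)⟩
  · rintro ⟨h1, h2, hU⟩
    exact isIsotropic_add_of_le_sup (fun v ⟨i, hi⟩ => hlam1 v ⟨i, hi.2⟩)
      (fun v ⟨i, hi⟩ => hlam2 v ⟨i, hi.2⟩) (by simp [h1]) (by simp [h2]) hU.ge

/-- For a general 3-form `λ̄ = λ̄1 + λ̄2` on a 6-dimensional space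
`W̄ = A1 ⊕ A2`, a 4-dimensional subspace `U4` is isotropic for `λ̄` iff
`dim (U4 ⊓ A1) = dim (U4 ⊓ A2) = 2` and `U4 = (U4 ⊓ A1) ⊕ (U4 ⊓ A2)`. -/
theorem stmt_1 (k : Type*) [Field k] [CharZero k]
    (W : Type*) [AddCommGroup W] [Module k W] [FiniteDimensional k W]
    (hW : finrank k W = 6)
    (A1 A2 : Submodule k W)
    (hA12 : A1 ⊓ A2 = ⊥) (hA12' : A1 ⊔ A2 = ⊤)
    (hA1 : finrank k A1 = 3) (hA2 : finrank k A2 = 3)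
    (lam1 lam2 : AlternatingMap k W k (Fin 3))
    (hlam1ne : lam1 ≠ 0) (hlam2ne : lam2 ≠ 0)
    (hlam1 : ∀ v : Fin 3 → W, (∃ i, v i ∈ A1) → lam1 v = 0)
    (hlam2 : ∀ v : Fin 3 → W, (∃ i, v i ∈ A2) → lam2 v = 0)
    (lam : AlternatingMap k W k (Fin 3)) (hlam : lam = lam1 + lam2)
    (U4 : Submodule k W) (hU4 : finrank k U4 = 4) :
    (∀ u1 ∈ U4, ∀ u2 ∈ U4, ∀ u3 ∈ U4, lam ![u1, u2, u3] = 0) ↔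
      (finrank k ↥(U4 ⊓ A1) = 2 ∧ finrank k ↥(U4 ⊓ A2) = 2 ∧
        (U4 ⊓ A1) ⊔ (U4 ⊓ A2) = U4) :=
  stmt_1_general k W hW A1 A2 hA12 hA12' hA1 hA2 lam1 lam2 hlam1ne hlam2ne hlam1 hlam2 lam hlam U4
    hU4
end

section
/- Let W̄ be a 6-dimensional k-vector space with a nondegenerate 2-form μ, and let λ̄ be any 3-form on W̄. Set W = k ⊕ W̄, w0 = (1,0), w0∨ : W → k the first projection, p : W → W̄ the second projection, and define the 3-form ξ on W by ξ(v1,v2,v3) = λ̄(pv1,pv2,pv3) + w0∨(v1)μ(pv2,pv3) − w0∨(v2)μ(pv1,pv3) + w0∨(v3)μ(pv1,pv2). Then the map U2 ↦ p(U2) is a bijection from the set of 2-dimensional subspaces U2 ⊆ W annihilated by ξ (i.e. ξ(u,u',w) = 0 for all u,u' ∈ U2 and all w ∈ W) onto the set of 2-dimensional subspaces Ū2 ⊆ W̄ such that μ vanishes on Ū2 and, for one (equivalently any) basis u', u'' of Ū2, the linear form λ̄(u',u'',·) on W̄ lies in the span of μ(u',·) and μ(u'',·). (Set-theoretic form of the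 paper's Proposition: the zero locus D_{λ̄,μ} ⊂ LGr_μ(2,W̄) is isomorphic to the G2-adjoint variety Gr_ξ(2,W).) -/
/-!
For `u = (a, x)` and `u' = (b, y)` in `k × W̄`, the form `ξ(u, u', ·)` vanishes iff `μ(x, y) = 0`
and `λ̄(x, y, ·) = b μ(x, ·) - a μ(y, ·)`. Since `μ` is nondegenerate, `μ(x, ·)` and `μ(y, ·)` are
independent whenever `x` and `y` are, so the first coordinates of a basis of an annihilated plane
are determined by its projection; and a vertical vector `(t, 0)`, `t ≠ 0`, in an annihilated plane
would force the whole plane to be vertical, so the projection keeps the dimension. Conversely, if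
`λ̄(v₁, v₂, ·) = c₁ μ(v₁, ·) + c₂ μ(v₂, ·)`, the lifts `(-c₂, v₁)` and `(c₁, v₂)` annihilate each
other, hence span an annihilated plane, `ξ` being alternating and bilinear in its first two
arguments.
-/

open Module Matrix

namespace AlternatingMap

variable {R M N : Type*} [CommSemiring R] [AddCommMonoid M] [Module R M] [AddCommMonoid N]
  [Module R N] {n : ℕ}

theorem map_vecCons_vecCons_add (f : M [⋀^Fin (n + 2)]→ₗ[R] N) (x y y' : M) (m : Fin n → M) :
    f (vecCons x (vecCons (y + y') m)) =
      f (vecCons x (vecCons y m)) + f (vecCons x (vecCons y' m)) :=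
  (f.curryLeft x).map_vecCons_add m y y'

theorem map_vecCons_vecCons_smul (f : M [⋀^Fin (n + 2)]→ₗ[R] N) (x y : M) (c : R)
    (m : Fin n → M) : f (vecCons x (vecCons (c • y) m)) = c • f (vecCons x (vecCons y m)) :=
  (f.curryLeft x).map_vecCons_smul m c y

end AlternatingMap

theorem Matrix.comp_vec2 {α β : Type*} (f : α → β) (a b : α) : f ∘ ![a, b] = ![f a, f b] := by
  ext i; fin_cases i <;> rfl

theorem LinearMap.IsAlt.apply_eq_zero_of_mem_span_pair {R M N : Type*} [CommRing R]
    [AddCommGroup M] [Module R M] [AddCommGroup N] [Module R N] {B : M →ₗ[R] M →ₗ[R] N}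
    (hB : B.IsAlt) {u₁ u₂ u u' : M} (h : B u₁ u₂ = 0) (hu : u ∈ Submodule.span R {u₁, u₂})
    (hu' : u' ∈ Submodule.span R {u₁, u₂}) : B u u' = 0 := by
  obtain ⟨a, b, rfl⟩ := Submodule.mem_span_pair.1 hu
  obtain ⟨c, d, rfl⟩ := Submodule.mem_span_pair.1 hu'
  simp [hB.self_eq_zero, ← hB.neg u₁ u₂, h]

section Plane

variable {k V : Type*} [Field k] [AddCommGroup V] [Module k V]

theorem finrank_span_pair {v₁ v₂ : V} (h : LinearIndependent k ![v₁, v₂]) :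
    finrank k (Submodule.span k {v₁, v₂}) = 2 := by
  rw [← Matrix.range_cons_cons_empty v₁ v₂ ![], finrank_span_eq_card h, Fintype.card_fin]

theorem Submodule.exists_linearIndependent_span_pair_eq {U : Submodule k V}
    (hU : finrank k U = 2) :
    ∃ v₁ v₂ : V, LinearIndependent k ![v₁, v₂] ∧ Submodule.span k {v₁, v₂} = U := by
  have : Module.Finite k U := Module.finite_of_finrank_eq_succ hU
  let b := Module.finBasisOfFinrankEq k U hU
  have hli : LinearIndependent k ![(b 0 : V), b 1] := by
    rw [show ![(b 0 : V), b 1] = U.subtype ∘ b by ext i; fin_cases i <;> rfl]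
    exact b.linearIndependent.map' U.subtype U.ker_subtype
  refine ⟨b 0, b 1, hli, Submodule.eq_of_le_of_finrank_le ?_ ?_⟩
  · simp [Submodule.span_le, Set.insert_subset_iff]
  · rw [finrank_span_pair hli, hU]

end Plane

section ExtendedForm

variable {k V : Type*} [Field k] [AddCommGroup V] [Module k V]
  (mu : V [⋀^Fin 2]→ₗ[k] k) (lam : V [⋀^Fin 3]→ₗ[k] k)

/-- The 3-form `ξ = λ̄ + w₀^∨ ∧ μ` on `k × V`, curried as a bilinear map in its first two
arguments. -/
def extendedForm : (k × V) →ₗ[k] (k × V) →ₗ[k] (k × V) → k :=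
  LinearMap.mk₂ k
    (fun u u' w => lam ![u.2, u'.2, w.2] + u.1 * mu ![u'.2, w.2] - u'.1 * mu ![u.2, w.2] +
      w.1 * mu ![u.2, u'.2])
    (fun _ _ _ => by
      funext; simp only [Prod.fst_add, Prod.snd_add, AlternatingMap.map_vecCons_add,
        Pi.add_apply]; ring)
    (fun _ _ _ => by
      funext; simp only [Prod.smul_fst, Prod.smul_snd, AlternatingMap.map_vecCons_smul,
        Pi.smul_apply, smul_eq_mul]; ring)
    (fun _ _ _ => by
      funext; simp only [Prod.fst_add, Prod.snd_add, AlternatingMap.map_vecCons_add,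
        AlternatingMap.map_vecCons_vecCons_add, Pi.add_apply]; ring)
    (fun _ _ _ => by
      funext; simp only [Prod.smul_fst, Prod.smul_snd, AlternatingMap.map_vecCons_smul,
        AlternatingMap.map_vecCons_vecCons_smul, Pi.smul_apply, smul_eq_mul]; ring)

theorem extendedForm_apply (u u' w : k × V) :
    extendedForm mu lam u u' w = lam ![u.2, u'.2, w.2] + u.1 * mu ![u'.2, w.2] -
      u'.1 * mu ![u.2, w.2] + w.1 * mu ![u.2, u'.2] :=
  rfl

theorem extendedForm_isAlt : (extendedForm mu lam).IsAlt := by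
  intro u
  funext w
  have hlam : lam ![u.2, u.2, w.2] = 0 := lam.map_eq_zero_of_eq _ (i := 0) (j := 1) rfl (by decide)
  have hmu : mu ![u.2, u.2] = 0 := mu.map_eq_zero_of_eq _ (i := 0) (j := 1) rfl (by decide)
  simp [extendedForm_apply, hlam, hmu]

variable {mu lam}

theorem extendedForm_eq_zero_iff {u u' : k × V} :
    extendedForm mu lam u u' = 0 ↔
      mu ![u.2, u'.2] = 0 ∧
        ∀ z, lam ![u.2, u'.2, z] = u'.1 * mu ![u.2, z] - u.1 * mu ![u'.2, z] := by
  have hlam : lam ![u.2, u'.2, 0] = 0 := lam.map_coord_zero 2 rfl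
  have hmu : ∀ x : V, mu ![x, 0] = 0 := fun x => mu.map_coord_zero 1 rfl
  rw [funext_iff]
  constructor
  · intro h
    refine ⟨by simpa [extendedForm_apply, hlam, hmu] using h (1, 0), fun z => ?_⟩
    have := h (0, z)
    simp only [extendedForm_apply, zero_mul, add_zero, Pi.zero_apply] at this
    linear_combination this
  · rintro ⟨hmu, hlam⟩ ⟨c, z⟩
    simp only [extendedForm_apply, hmu, hlam, Pi.zero_apply]
    ring

theorem eq_zero_of_forall_mul_mu_eq (hmu : ∀ v, (∀ w, mu ![v, w] = 0) → v = 0) {x y : V}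
    (hxy : LinearIndependent k ![x, y]) {a b : k} (h : ∀ z, a * mu ![x, z] = b * mu ![y, z]) :
    a = 0 ∧ b = 0 := by
  have hv : a • x + (-b) • y = 0 := hmu _ fun z => by
    rw [AlternatingMap.map_vecCons_add, AlternatingMap.map_vecCons_smul,
      AlternatingMap.map_vecCons_smul, smul_eq_mul, smul_eq_mul, h z]
    ring
  obtain ⟨ha, hb⟩ := LinearIndependent.pair_iff.1 hxy a (-b) hv
  exact ⟨ha, neg_eq_zero.1 hb⟩

theorem eq_of_extendedForm_eq_zero (hmu : ∀ v, (∀ w, mu ![v, w] = 0) → v = 0)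
    {u u' x x' : k × V} (hu : extendedForm mu lam u u' = 0) (hx : extendedForm mu lam x x' = 0)
    (h : x.2 = u.2) (h' : x'.2 = u'.2) (hli : LinearIndependent k ![u.2, u'.2]) :
    x = u ∧ x' = u' := by
  obtain ⟨-, hu⟩ := extendedForm_eq_zero_iff.1 hu
  obtain ⟨-, hx⟩ := extendedForm_eq_zero_iff.1 hx
  rw [h, h'] at hx
  obtain ⟨h₁, h₂⟩ := eq_zero_of_forall_mul_mu_eq hmu hli (a := u'.1 - x'.1) (b := u.1 - x.1)
    fun z => by linear_combination hx z - hu z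
  exact ⟨Prod.ext (sub_eq_zero.1 h₂).symm h, Prod.ext (sub_eq_zero.1 h₁).symm h'⟩

theorem disjoint_ker_snd_of_extendedForm (hmu : ∀ v, (∀ w, mu ![v, w] = 0) → v = 0)
    {U : Submodule k (k × V)} (hU : ∀ u ∈ U, ∀ u' ∈ U, extendedForm mu lam u u' = 0)
    (hrank : 1 < finrank k U) : Disjoint U (LinearMap.ker (LinearMap.snd k k V)) := by
  rw [Submodule.disjoint_def]
  rintro ⟨t, x⟩ hu (rfl : x = 0)
  by_contra hne
  have ht : t ≠ 0 := fun ht => hne (by rw [ht]; rfl)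
  have hvert : U ≤ LinearMap.range (LinearMap.inl k k V) := fun u' hu' => by
    rw [← LinearMap.ker_snd, LinearMap.mem_ker, LinearMap.snd_apply]
    refine hmu _ fun z => ?_
    have := (extendedForm_eq_zero_iff.1 (hU _ hu u' hu')).2 z
    rw [lam.map_coord_zero (m := ![0, u'.2, z]) 0 rfl, mu.map_coord_zero (m := ![0, z]) 0 rfl]
      at this
    exact (mul_eq_zero.1 (by linear_combination this)).resolve_left ht
  have := Submodule.finrank_mono hvert
  rw [LinearMap.finrank_range_of_inj LinearMap.inl_injective, finrank_self] at this
  omega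

variable (mu lam)

/-- The paper's `Gr_ξ(2, k × V)`. -/
def annihilatedPlanes : Set (Submodule k (k × V)) :=
  {U | finrank k U = 2 ∧ ∀ u ∈ U, ∀ u' ∈ U, extendedForm mu lam u u' = 0}

/-- The paper's zero locus `D_{λ̄,μ} ⊂ LGr_μ(2, V)`. -/
def admissiblePlanes : Set (Submodule k V) :=
  {V₂ | finrank k V₂ = 2 ∧ (∀ u ∈ V₂, ∀ u' ∈ V₂, mu ![u, u'] = 0) ∧
    ∀ u' u'' : V, u' ∈ V₂ → u'' ∈ V₂ → LinearIndependent k ![u', u''] →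
      ∃ c₁ c₂ : k, ∀ w, lam ![u', u'', w] = c₁ * mu ![u', w] + c₂ * mu ![u'', w]}

variable {mu lam}

theorem mapsTo_map_snd (hmu : ∀ v, (∀ w, mu ![v, w] = 0) → v = 0) :
    Set.MapsTo (Submodule.map (LinearMap.snd k k V)) (annihilatedPlanes mu lam)
      (admissiblePlanes mu lam) := by
  rintro U ⟨hrank, hU⟩
  have hinj := LinearMap.injective_domRestrict_iff.2
    (disjoint_ker_snd_of_extendedForm hmu hU (by omega))
  refine ⟨?_, ?_, ?_⟩
  · rw [← LinearMap.range_domRestrict, LinearMap.finrank_range_of_inj hinj, hrank]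
  · rintro _ ⟨u, hu, rfl⟩ _ ⟨u', hu', rfl⟩
    exact (extendedForm_eq_zero_iff.1 (hU u hu u' hu')).1
  · rintro _ _ ⟨u, hu, rfl⟩ ⟨u', hu', rfl⟩ -
    refine ⟨u'.1, -u.1, fun z => ?_⟩
    rw [LinearMap.snd_apply, LinearMap.snd_apply,
      (extendedForm_eq_zero_iff.1 (hU u hu u' hu')).2 z]
    ring

theorem injOn_map_snd (hmu : ∀ v, (∀ w, mu ![v, w] = 0) → v = 0) :
    Set.InjOn (Submodule.map (LinearMap.snd k k V)) (annihilatedPlanes mu lam) := by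
  rintro U ⟨hrank, hU⟩ U' ⟨hrank', hU'⟩ hmap
  obtain ⟨u₁, u₂, hli, rfl⟩ := Submodule.exists_linearIndependent_span_pair_eq hrank
  have hu₁ : u₁ ∈ Submodule.span k {u₁, u₂} := Submodule.subset_span (by simp)
  have hu₂ : u₂ ∈ Submodule.span k {u₁, u₂} := Submodule.subset_span (by simp)
  have hli₂ : LinearIndependent k ![u₁.2, u₂.2] := by
    simpa [Matrix.comp_vec2] using hli.map (f := LinearMap.snd k k V) (by
      rw [Matrix.range_cons_cons_empty]
      exact disjoint_ker_snd_of_extendedForm hmu hU (by omega))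
  have lift : ∀ u ∈ Submodule.span k {u₁, u₂}, ∃ x ∈ U', x.2 = u.2 := fun u hu => by
    simpa [hmap] using Submodule.mem_map_of_mem (f := LinearMap.snd k k V) hu
  obtain ⟨x₁, hx₁, h₁⟩ := lift u₁ hu₁
  obtain ⟨x₂, hx₂, h₂⟩ := lift u₂ hu₂
  obtain ⟨rfl, rfl⟩ :=
    eq_of_extendedForm_eq_zero hmu (hU _ hu₁ _ hu₂) (hU' _ hx₁ _ hx₂) h₁ h₂ hli₂
  have : Module.Finite k U' := Module.finite_of_finrank_eq_succ hrank'
  refine Submodule.eq_of_le_of_finrank_le ?_ (by rw [hrank, hrank'])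
  simp [Submodule.span_le, Set.insert_subset_iff, hx₁, hx₂]

theorem surjOn_map_snd :
    Set.SurjOn (Submodule.map (LinearMap.snd k k V)) (annihilatedPlanes mu lam)
      (admissiblePlanes mu lam) := by
  rintro V₂ ⟨hrank, hiso, hlam⟩
  obtain ⟨v₁, v₂, hli, rfl⟩ := Submodule.exists_linearIndependent_span_pair_eq hrank
  have hv₁ : v₁ ∈ Submodule.span k {v₁, v₂} := Submodule.subset_span (by simp)
  have hv₂ : v₂ ∈ Submodule.span k {v₁, v₂} := Submodule.subset_span (by simp)
  obtain ⟨c₁, c₂, hc⟩ := hlam v₁ v₂ hv₁ hv₂ hli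
  have hpair : extendedForm mu lam (-c₂, v₁) (c₁, v₂) = 0 :=
    extendedForm_eq_zero_iff.2 ⟨hiso _ hv₁ _ hv₂, fun z => by rw [hc z]; ring⟩
  have hli' : LinearIndependent k ![((-c₂, v₁) : k × V), (c₁, v₂)] := by
    refine LinearIndependent.of_comp (LinearMap.snd k k V) ?_
    simpa [Matrix.comp_vec2] using hli
  refine ⟨Submodule.span k {(-c₂, v₁), (c₁, v₂)}, ⟨finrank_span_pair hli', fun u hu u' hu' =>
    (extendedForm_isAlt mu lam).apply_eq_zero_of_mem_span_pair hpair hu hu'⟩, ?_⟩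
  rw [Submodule.map_span, Set.image_pair]
  rfl

theorem bijOn_map_snd (hmu : ∀ v, (∀ w, mu ![v, w] = 0) → v = 0) :
    Set.BijOn (Submodule.map (LinearMap.snd k k V)) (annihilatedPlanes mu lam)
      (admissiblePlanes mu lam) :=
  ⟨mapsTo_map_snd hmu, injOn_map_snd hmu, surjOn_map_snd⟩

end ExtendedForm

theorem stmt_14_general (k : Type*) [Field k]
    (Wbar : Type*) [AddCommGroup Wbar] [Module k Wbar]
    (mu : AlternatingMap k Wbar k (Fin 2))
    (hmund : ∀ v : Wbar, (∀ w : Wbar, mu ![v, w] = 0) → v = 0)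
    (lam : AlternatingMap k Wbar k (Fin 3))
    (xi : (k × Wbar) → (k × Wbar) → (k × Wbar) → k)
    (hxi : ∀ v1 v2 v3 : k × Wbar, xi v1 v2 v3 =
      lam ![v1.2, v2.2, v3.2] + v1.1 * mu ![v2.2, v3.2] -
        v2.1 * mu ![v1.2, v3.2] + v3.1 * mu ![v1.2, v2.2]) :
    Set.BijOn
      (fun U2 : Submodule k (k × Wbar) =>
        Submodule.map (LinearMap.snd k k Wbar) U2)
      {U2 : Submodule k (k × Wbar) | finrank k U2 = 2 ∧
        ∀ u ∈ U2, ∀ u' ∈ U2, ∀ w : k × Wbar, xi u u' w = 0}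
      {V2 : Submodule k Wbar | finrank k V2 = 2 ∧
        (∀ u ∈ V2, ∀ u' ∈ V2, mu ![u, u'] = 0) ∧
        (∀ u' u'' : Wbar, u' ∈ V2 → u'' ∈ V2 →
          LinearIndependent k ![u', u''] →
          ∃ c1 c2 : k, ∀ w : Wbar,
            lam ![u', u'', w] = c1 * mu ![u', w] + c2 * mu ![u'', w])} := by
  obtain rfl : xi = fun u u' w => extendedForm mu lam u u' w := funext₃ hxi
  have key := bijOn_map_snd (lam := lam) hmund
  simp only [annihilatedPlanes, funext_iff, Pi.zero_apply] at key
  exact key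

/-- for the 3-form `ξ = λ̄ + w0∨ ∧ μ` on `W = k ⊕ W̄`, the
projection `p : W → W̄` induces a bijection from the set of 2-subspaces of `W`
annihilated by `ξ` onto the set of μ-isotropic 2-subspaces `Ū2 ⊆ W̄` such that
for any basis `u', u''` the form `λ̄(u',u'',·)` lies in the span of `μ(u',·)`
and `μ(u'',·)` (the identification `D_{λ̄,μ} ≅ Gr_ξ(2,W)`). -/
theorem stmt_14 (k : Type*) [Field k] [CharZero k]
    (Wbar : Type*) [AddCommGroup Wbar] [Module k Wbar] [FiniteDimensional k Wbar]
    (hWbar : finrank k Wbar = 6)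
    (mu : AlternatingMap k Wbar k (Fin 2))
    (hmund : ∀ v : Wbar, (∀ w : Wbar, mu ![v, w] = 0) → v = 0)
    (lam : AlternatingMap k Wbar k (Fin 3))
    (xi : (k × Wbar) → (k × Wbar) → (k × Wbar) → k)
    (hxi : ∀ v1 v2 v3 : k × Wbar, xi v1 v2 v3 =
      lam ![v1.2, v2.2, v3.2] + v1.1 * mu ![v2.2, v3.2] -
        v2.1 * mu ![v1.2, v3.2] + v3.1 * mu ![v1.2, v2.2]) :
    Set.BijOn
      (fun U2 : Submodule k (k × Wbar) =>
        Submodule.map (LinearMap.snd k k Wbar) U2)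
      {U2 : Submodule k (k × Wbar) | finrank k U2 = 2 ∧
        ∀ u ∈ U2, ∀ u' ∈ U2, ∀ w : k × Wbar, xi u u' w = 0}
      {V2 : Submodule k Wbar | finrank k V2 = 2 ∧
        (∀ u ∈ V2, ∀ u' ∈ V2, mu ![u, u'] = 0) ∧
        (∀ u' u'' : Wbar, u' ∈ V2 → u'' ∈ V2 →
          LinearIndependent k ![u', u''] →
          ∃ c1 c2 : k, ∀ w : Wbar,
            lam ![u', u'', w] = c1 * mu ![u', w] + c2 * mu ![u'', w])} :=
  stmt_14_general k Wbar mu hmund lam xi hxi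
end
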